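/- Let Q be a finite symmetric quiver with a_{ii} ≥ 1 for all i ∈ I, and let γ ∈ ℤ_{≥0}^I. Then the ℚ-linear span of all shuffle products f₁·f₂, taken over all decompositions γ = γ₁ + γ₂ with γ₁,γ₂ ∈ ℤ_{≥0}^I∖{0} and over all f₁ ∈ ℋ_{γ₁}, f₂ ∈ ℋ_{γ₂}, equals J_γ^{P_γ}·ℚ[σ_γ] ⊆ ℋ_γ, i.e. the image of the multiplication map ⊕_{γ₁+γ₂=γ, γ₁,γ₂≠0} ℋ_{γ₁} ⊗ ℋ_{γ₂} → ℋ_γ is precisely the ℚ[σ_γ]-submodule of ℋ_γ generated by J_γ^{P_γ} = J_γ ∩ ℋ_γ^{prim}. -/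

import Mathlib

/-!
Symmetrization `Sym = ∑_{σ ∈ P_γ} σ` identifies both spans with the span of the elements
`Sym(q · F_{γ₁,γ₂})`, `q ∈ A_γ`.

Since `a_ii ≥ 1`, the kernel of the shuffle product is the polynomial `F_{γ₁,γ₂}`. Every
permutation in `P_{γ₁+γ₂}` is uniquely a shuffle times a block permutation from
`P_{γ₁} × P_{γ₂}`, and the block permutations fix `F_{γ₁,γ₂}`; hence
`Sym(u v F_{γ₁,γ₂}) = Sym(u) · Sym(v)`. As `A_{γ₁+γ₂}` is spanned by such products `u v` and a
symmetric `f` equals `Sym(f / |P|)`, the shuffle products span the same space as the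
`Sym(q F_{γ₁,γ₂})`.

On the other side, `A_γ` is spanned by the `p σ_γ^n` with `p` primitive, and `σ_γ` is symmetric,
so `Sym(p σ_γ^n F_{γ₁,γ₂}) = Sym(p F_{γ₁,γ₂}) σ_γ^n` with `Sym(p F_{γ₁,γ₂}) ∈ J_γ^{P_γ}`.
Conversely `g σ_γ^n = Sym(|P|⁻¹ σ_γ^n g)` for symmetric `g ∈ J_γ`, and `J_γ` is generated by
the `P_γ`-translates of the `F_{γ₁,γ₂}`.
-/

open MvPolynomial

namespace COHA

variable {I : Type} [Fintype I] [DecidableEq I]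

/-- Variables `x_{i,α}`, `i ∈ I`, `1 ≤ α ≤ γ i`. -/
abbrev Vars (γ : I → ℕ) : Type := Σ i : I, Fin (γ i)

/-- The polynomial ring `A_γ = ℚ[x_{i,α}]`. -/
abbrev Amod (γ : I → ℕ) : Type := MvPolynomial (Vars γ) ℚ

/-- A tuple of permutations `σ ∈ P_γ = ∏_i S_{γ^i}` acting on the variables. -/
def permEquiv {γ : I → ℕ} (σ : ∀ i, Equiv.Perm (Fin (γ i))) : Vars γ ≃ Vars γ :=
  Equiv.sigmaCongrRight σ

/-- Invariance under `P_γ`; `ℋ_γ = {f | IsSym f}`. -/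
def IsSym {γ : I → ℕ} (f : Amod γ) : Prop :=
  ∀ σ : ∀ i, Equiv.Perm (Fin (γ i)), rename (permEquiv σ) f = f

/-- The Euler form of the quiver with `a i j` arrows from `i` to `j`. -/
def chi (a : I → I → ℕ) (γ₁ γ₂ : I → ℕ) : ℤ :=
  ∑ i : I, (γ₁ i : ℤ) * (γ₂ i : ℤ) - ∑ i : I, ∑ j : I, (a i j : ℤ) * (γ₁ i : ℤ) * (γ₂ j : ℤ)

/-- `σ_γ`, the sum of all variables. -/
noncomputable def sigmaP (γ : I → ℕ) : Amod γ := ∑ v : Vars γ, X v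

/-- Identification of variable sets coming from an equality of dimension vectors. -/
def castV {γ γ' : I → ℕ} (h : γ = γ') : Vars γ ≃ Vars γ' :=
  Equiv.sigmaCongrRight fun i => finCongr (congrFun h i)

/-- Identification of polynomial rings coming from an equality of dimension vectors. -/
noncomputable def castA {γ γ' : I → ℕ} (h : γ = γ') : Amod γ → Amod γ' :=
  rename (castV h)

/-- `ℋ_γ` as a `ℚ`-submodule of `A_γ`. -/
noncomputable def Hsub (γ : I → ℕ) : Submodule ℚ (Amod γ) where
  carrier := {f | IsSym f}
  add_mem' := fun {f g} hf hg σ => by rw [map_add, hf σ, hg σ]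
  zero_mem' := fun σ => map_zero _
  smul_mem' := fun c f hf σ => by rw [map_smul, hf σ]

/-- `ℋ_γ` as a `ℚ`-subalgebra of `A_γ`. -/
noncomputable def Halg (γ : I → ℕ) : Subalgebra ℚ (Amod γ) where
  carrier := {f | IsSym f}
  mul_mem' := fun {f g} hf hg σ => by rw [map_mul, hf σ, hg σ]
  one_mem' := fun σ => map_one _
  add_mem' := fun {f g} hf hg σ => by rw [map_add, hf σ, hg σ]
  zero_mem' := fun σ => map_zero _
  algebraMap_mem' := fun r σ => by
    simp [MvPolynomial.algebraMap_eq]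
/-- Inclusion of the first block of variables. -/
def inlV {γ₁ γ₂ : I → ℕ} : Vars γ₁ → Vars (γ₁ + γ₂) :=
  fun v => ⟨v.1, Fin.castAdd (γ₂ v.1) v.2⟩

/-- Inclusion of the second block of variables. -/
def inrV {γ₁ γ₂ : I → ℕ} : Vars γ₂ → Vars (γ₁ + γ₂) :=
  fun v => ⟨v.1, Fin.natAdd (γ₁ v.1) v.2⟩

/-- The numerator `∏_{i,j} ∏_{α₁,α₂} (x''_{j,α₂} - x'_{i,α₁})^(a i j)` of the
Kontsevich–Soibelman kernel. -/
noncomputable def shuffleNum (a : I → I → ℕ) (γ₁ γ₂ : I → ℕ) : Amod (γ₁ + γ₂) :=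
  ∏ i : I, ∏ j : I, ∏ α₁ : Fin (γ₁ i), ∏ α₂ : Fin (γ₂ j),
    (X (inrV (γ₁ := γ₁) ⟨j, α₂⟩) - X (inlV (γ₂ := γ₂) ⟨i, α₁⟩)) ^ (a i j)

/-- The denominator `∏_i ∏_{α₁,α₂} (x''_{i,α₂} - x'_{i,α₁})` of the
Kontsevich–Soibelman kernel. -/
noncomputable def shuffleDen (γ₁ γ₂ : I → ℕ) : Amod (γ₁ + γ₂) :=
  ∏ i : I, ∏ α₁ : Fin (γ₁ i), ∏ α₂ : Fin (γ₂ i),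
    (X (inrV (γ₁ := γ₁) ⟨i, α₂⟩) - X (inlV (γ₂ := γ₂) ⟨i, α₁⟩))

/-- `σ` is an `(n₁, n₂)`-shuffle: it is increasing on the two blocks. -/
def IsShuffle (n₁ n₂ : ℕ) (σ : Equiv.Perm (Fin (n₁ + n₂))) : Prop :=
  (∀ p q : Fin n₁, p < q → σ (Fin.castAdd n₂ p) < σ (Fin.castAdd n₂ q)) ∧
  (∀ p q : Fin n₂, p < q → σ (Fin.natAdd n₁ p) < σ (Fin.natAdd n₁ q))

open Classical in
/-- The sum, over all tuples of shuffles, of the permuted rational functions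
`f₁(x') f₂(x'') ∏ (x''-x')^(a i j) / ∏ (x''-x')`, as an element of the fraction
field of `A_{γ₁+γ₂}`. -/
noncomputable def shuffleSum (a : I → I → ℕ) (γ₁ γ₂ : I → ℕ)
    (f₁ : Amod γ₁) (f₂ : Amod γ₂) : FractionRing (Amod (γ₁ + γ₂)) :=
  ∑ σ : ∀ i : I, Equiv.Perm (Fin (γ₁ i + γ₂ i)),
    if ∀ i : I, IsShuffle (γ₁ i) (γ₂ i) (σ i) then
      algebraMap (Amod (γ₁ + γ₂)) _
          (rename (permEquiv (γ := γ₁ + γ₂) σ)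
            (rename (inlV (γ₂ := γ₂)) f₁ * rename (inrV (γ₁ := γ₁)) f₂ *
              shuffleNum a γ₁ γ₂)) /
        algebraMap (Amod (γ₁ + γ₂)) _
          (rename (permEquiv (γ := γ₁ + γ₂) σ) (shuffleDen γ₁ γ₂))
    else 0

open Classical in
/-- The Kontsevich–Soibelman shuffle product `f₁ · f₂ ∈ ℋ_{γ₁+γ₂}`: the unique
polynomial mapping to `shuffleSum` in the fraction field. -/
noncomputable def shuffleMul (a : I → I → ℕ) {γ₁ γ₂ : I → ℕ}
    (f₁ : Amod γ₁) (f₂ : Amod γ₂) : Amod (γ₁ + γ₂) :=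
  if h : ∃ p : Amod (γ₁ + γ₂),
      algebraMap (Amod (γ₁ + γ₂)) (FractionRing (Amod (γ₁ + γ₂))) p =
        shuffleSum a γ₁ γ₂ f₁ f₂
  then h.choose else 0
/-- `A_γ^{prim}`: the subalgebra generated by all differences of variables. -/
noncomputable def Aprim (γ : I → ℕ) : Subalgebra ℚ (Amod γ) :=
  Algebra.adjoin ℚ {f : Amod γ | ∃ u v : Vars γ, f = X u - X v}

/-- For a decomposition `γ = γ₁ + γ₂`, the polynomial
`F_{γ₁,γ₂} = ∏_{i,j} ∏ (x''-x')^(a i j) / ∏_i ∏ (x''-x')`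
(written as a polynomial, assuming `a i i ≥ 1`). -/
noncomputable def Fpoly (a : I → I → ℕ) (γ₁ γ₂ : I → ℕ) : Amod (γ₁ + γ₂) :=
  ∏ i : I, ∏ j : I, ∏ α₁ : Fin (γ₁ i), ∏ α₂ : Fin (γ₂ j),
    (X (inrV (γ₁ := γ₁) ⟨j, α₂⟩) - X (inlV (γ₂ := γ₂) ⟨i, α₁⟩)) ^
      (if i = j then a i i - 1 else a i j)

/-- Generators of `J_γ`: the `P_γ`-orbits of all `F_{γ₁,γ₂}`. -/
def Jgen (a : I → I → ℕ) (γ : I → ℕ) : Set ↥(Aprim (I := I) γ) :=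
  {g | ∃ (γ₁ γ₂ : I → ℕ) (_ : γ₁ ≠ 0) (_ : γ₂ ≠ 0) (h : γ₁ + γ₂ = γ)
        (σ : ∀ i, Equiv.Perm (Fin (γ i))),
      (g : Amod γ) = rename (permEquiv σ) (castA h (Fpoly a γ₁ γ₂))}

/-- The ideal `J_γ ⊆ A_γ^{prim}`. -/
noncomputable def Jideal (a : I → I → ℕ) (γ : I → ℕ) : Ideal ↥(Aprim (I := I) γ) :=
  Ideal.span (Jgen a γ)

/-- Twice `N_γ(Q) - 2 + Σ_i γ^i`:
`Σ_{i≠j} a_ij γ^i γ^j + Σ_i max(a_ii - 1, 0) γ^i (γ^i - 1)`. -/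
def Nnum (a : I → I → ℕ) (γ : I → ℕ) : ℕ :=
  (∑ i : I, ∑ j : I, if i = j then 0 else a i j * γ i * γ j) +
    ∑ i : I, (a i i - 1) * γ i * (γ i - 1)

/-- The bound `N_γ(Q)`. -/
def NQ (a : I → I → ℕ) (γ : I → ℕ) : ℤ :=
  ((Nnum a γ / 2 : ℕ) : ℤ) - (∑ i : I, (γ i : ℤ)) + 2

end COHA

section FinSumPerm

variable {n₁ n₂ : ℕ}

def finSumPerm (τ₁ : Equiv.Perm (Fin n₁)) (τ₂ : Equiv.Perm (Fin n₂)) :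
    Equiv.Perm (Fin (n₁ + n₂)) :=
  finSumFinEquiv.permCongr (τ₁.sumCongr τ₂)

@[simp]
lemma finSumPerm_castAdd (τ₁ : Equiv.Perm (Fin n₁)) (τ₂ : Equiv.Perm (Fin n₂)) (p : Fin n₁) :
    finSumPerm τ₁ τ₂ (Fin.castAdd n₂ p) = Fin.castAdd n₂ (τ₁ p) := by
  simp [finSumPerm, Equiv.permCongr_apply]

@[simp]
lemma finSumPerm_natAdd (τ₁ : Equiv.Perm (Fin n₁)) (τ₂ : Equiv.Perm (Fin n₂)) (p : Fin n₂) :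
    finSumPerm τ₁ τ₂ (Fin.natAdd n₁ p) = Fin.natAdd n₁ (τ₂ p) := by
  simp [finSumPerm, Equiv.permCongr_apply]

lemma finSumPerm_mul (τ₁ ν₁ : Equiv.Perm (Fin n₁)) (τ₂ ν₂ : Equiv.Perm (Fin n₂)) :
    finSumPerm τ₁ τ₂ * finSumPerm ν₁ ν₂ = finSumPerm (τ₁ * ν₁) (τ₂ * ν₂) := by
  rw [finSumPerm, finSumPerm, finSumPerm, ← Equiv.Perm.sumCongr_mul, Equiv.permCongr_mul]

lemma Equiv.Perm.eq_of_monotone_comp {α : Type*} [PartialOrder α] {n : ℕ} {f : Fin n → α}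
    (hf : Function.Injective f) {σ τ : Equiv.Perm (Fin n)}
    (hσ : Monotone (f ∘ σ)) (hτ : Monotone (f ∘ τ)) : σ = τ :=
  Equiv.coe_inj.mp (hf.comp_left (Tuple.unique_monotone hσ hτ))

end FinSumPerm

namespace MvPolynomial

lemma span_eq_top_of_X_mem_adjoin {σ R : Type*} [CommSemiring R]
    (M : Submonoid (MvPolynomial σ R))
    (hX : ∀ v, X v ∈ Algebra.adjoin R (M : Set (MvPolynomial σ R))) :
    Submodule.span R (M : Set (MvPolynomial σ R)) = ⊤ := by
  have htop : Algebra.adjoin R (M : Set (MvPolynomial σ R)) = ⊤ :=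
    eq_top_iff.mpr (adjoin_range_X (R := R) ▸ Algebra.adjoin_le (Set.range_subset_iff.mpr hX))
  have h := Algebra.adjoin_eq_span (R := R) (M : Set (MvPolynomial σ R))
  rwa [Submonoid.closure_eq, htop, Algebra.top_toSubmodule, eq_comm] at h

lemma span_rename_mul_rename_eq_top {σ α β R : Type*} [CommSemiring R]
    {f : α → σ} {g : β → σ} (hfg : ∀ v, v ∈ Set.range f ∨ v ∈ Set.range g) :
    Submodule.span R ((((rename f : MvPolynomial α R →ₐ[R] _).range.toSubmonoid ⊔
      (rename g : MvPolynomial β R →ₐ[R] _).range.toSubmonoid) : Submonoid _) :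
        Set (MvPolynomial σ R)) = ⊤ := by
  refine span_eq_top_of_X_mem_adjoin _ fun v => Algebra.subset_adjoin ?_
  rcases hfg v with ⟨u, rfl⟩ | ⟨u, rfl⟩
  · exact Submonoid.mem_sup_left ⟨X u, rename_X f u⟩
  · exact Submonoid.mem_sup_right ⟨X u, rename_X g u⟩

end MvPolynomial

namespace COHA

section Shuffles

variable {n₁ n₂ : ℕ}

lemma isShuffle_iff (s : Equiv.Perm (Fin (n₁ + n₂))) :
    IsShuffle n₁ n₂ s ↔ StrictMono (s ∘ Fin.castAdd n₂) ∧ StrictMono (s ∘ Fin.natAdd n₁) :=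
  Iff.rfl

lemma exists_isShuffle_mul_finSumPerm (π : Equiv.Perm (Fin (n₁ + n₂))) :
    ∃ s τ₁ τ₂, IsShuffle n₁ n₂ s ∧ s * finSumPerm τ₁ τ₂ = π := by
  set τ₁ := Tuple.sort (π ∘ Fin.castAdd n₂)
  set τ₂ := Tuple.sort (π ∘ Fin.natAdd n₁)
  refine ⟨π * finSumPerm τ₁ τ₂, τ₁⁻¹, τ₂⁻¹, (isShuffle_iff _).mpr ⟨?_, ?_⟩, ?_⟩
  · have hinj : Function.Injective ((π ∘ Fin.castAdd n₂) ∘ τ₁) :=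
      (π.injective.comp (Fin.castAdd_injective _ _)).comp τ₁.injective
    convert (Tuple.monotone_sort (π ∘ Fin.castAdd n₂)).strictMono_of_injective hinj using 1
    ext p
    simp [τ₁]
  · have hinj : Function.Injective ((π ∘ Fin.natAdd n₁) ∘ τ₂) :=
      (π.injective.comp (Fin.natAdd_injective _ _)).comp τ₂.injective
    convert (Tuple.monotone_sort (π ∘ Fin.natAdd n₁)).strictMono_of_injective hinj using 1
    ext p
    simp [τ₂]
  · rw [mul_assoc, finSumPerm_mul, mul_inv_cancel, mul_inv_cancel]
    ext x
    induction x using Fin.addCases <;> simp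

lemma IsShuffle.eq_of_mul_finSumPerm_eq {s s' : Equiv.Perm (Fin (n₁ + n₂))}
    {τ₁ ν₁ : Equiv.Perm (Fin n₁)} {τ₂ ν₂ : Equiv.Perm (Fin n₂)}
    (hs : IsShuffle n₁ n₂ s) (hs' : IsShuffle n₁ n₂ s')
    (h : s * finSumPerm τ₁ τ₂ = s' * finSumPerm ν₁ ν₂) :
    s = s' ∧ τ₁ = ν₁ ∧ τ₂ = ν₂ := by
  rw [isShuffle_iff] at hs hs'
  set π := s * finSumPerm τ₁ τ₂
  have h₁ : τ₁⁻¹ = ν₁⁻¹ := by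
    refine Equiv.Perm.eq_of_monotone_comp (f := π ∘ Fin.castAdd n₂)
      (π.injective.comp (Fin.castAdd_injective _ _)) ?_ ?_
    · convert hs.1.monotone using 1; ext p; simp [π]
    · convert hs'.1.monotone using 1; ext p; simp [π, h]
  have h₂ : τ₂⁻¹ = ν₂⁻¹ := by
    refine Equiv.Perm.eq_of_monotone_comp (f := π ∘ Fin.natAdd n₁)
      (π.injective.comp (Fin.natAdd_injective _ _)) ?_ ?_
    · convert hs.2.monotone using 1; ext p; simp [π]
    · convert hs'.2.monotone using 1; ext p; simp [π, h]
  rw [inv_inj] at h₁ h₂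
  subst h₁ h₂
  exact ⟨mul_right_cancel h, rfl, rfl⟩

end Shuffles

section Permute

variable {I : Type} {γ : I → ℕ}

noncomputable def permute (σ : ∀ i, Equiv.Perm (Fin (γ i))) : Amod γ →ₐ[ℚ] Amod γ :=
  rename (permEquiv σ)

lemma IsSym.permute_eq {f : Amod γ} (hf : IsSym f) (σ : ∀ i, Equiv.Perm (Fin (γ i))) :
    permute σ f = f :=
  hf σ

lemma permute_permute (σ τ : ∀ i, Equiv.Perm (Fin (γ i))) (f : Amod γ) :
    permute σ (permute τ f) = permute (σ * τ) f := by
  have : permEquiv σ ∘ permEquiv τ = permEquiv (σ * τ) := funext fun _ => rfl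
  simp only [permute, rename_rename, this]

@[simp]
lemma permute_one (f : Amod γ) : permute 1 f = f := by
  have : (permEquiv (1 : ∀ i, Equiv.Perm (Fin (γ i))) : Vars γ → Vars γ) = id := funext fun _ => rfl
  simp only [permute, this, rename_id, AlgHom.id_apply]

end Permute

section Symmetrize

variable {I : Type} [Fintype I] {γ : I → ℕ}

lemma isSym_sigmaP (γ : I → ℕ) : IsSym (sigmaP γ) := fun σ => by
  simp only [sigmaP, map_sum, rename_X]
  exact Fintype.sum_equiv (permEquiv σ) _ _ fun _ => rfl

variable [DecidableEq I]

noncomputable def symmetrize (γ : I → ℕ) : Amod γ →ₗ[ℚ] Amod γ :=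
  ∑ σ : ∀ i, Equiv.Perm (Fin (γ i)), (permute σ).toLinearMap

lemma symmetrize_apply (f : Amod γ) : symmetrize γ f = ∑ σ, permute σ f := by
  simp [symmetrize]

lemma permute_symmetrize (ρ : ∀ i, Equiv.Perm (Fin (γ i))) (f : Amod γ) :
    permute ρ (symmetrize γ f) = symmetrize γ f := by
  simp only [symmetrize_apply, map_sum, permute_permute]
  exact Fintype.sum_equiv (Equiv.mulLeft ρ) _ _ fun _ => rfl

lemma isSym_symmetrize (f : Amod γ) : IsSym (symmetrize γ f) :=
  fun ρ => permute_symmetrize ρ f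

lemma symmetrize_permute (ρ : ∀ i, Equiv.Perm (Fin (γ i))) (f : Amod γ) :
    symmetrize γ (permute ρ f) = symmetrize γ f := by
  simp only [symmetrize_apply, permute_permute]
  exact Fintype.sum_equiv (Equiv.mulRight ρ) _ _ fun _ => rfl

lemma symmetrize_mul_of_isSym {g : Amod γ} (hg : IsSym g) (f : Amod γ) :
    symmetrize γ (f * g) = symmetrize γ f * g := by
  simp only [symmetrize_apply, map_mul, Finset.sum_mul]
  exact Finset.sum_congr rfl fun σ _ => by rw [hg.permute_eq]

lemma symmetrize_of_isSym {f : Amod γ} (hf : IsSym f) :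
    symmetrize γ f = (Fintype.card (∀ i, Equiv.Perm (Fin (γ i))) : ℚ) • f := by
  rw [symmetrize_apply, Finset.sum_congr rfl fun σ _ => hf.permute_eq σ, Finset.sum_const,
    Finset.card_univ, Nat.cast_smul_eq_nsmul]

lemma symmetrize_inv_card_smul {f : Amod γ} (hf : IsSym f) :
    symmetrize γ ((Fintype.card (∀ i, Equiv.Perm (Fin (γ i))) : ℚ)⁻¹ • f) = f := by
  rw [map_smul, symmetrize_of_isSym hf, smul_smul, inv_mul_cancel₀ (by positivity), one_smul]

end Symmetrize

section Blocks

variable {I : Type} {γ₁ γ₂ : I → ℕ}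

def blockPerm (τ₁ : ∀ i, Equiv.Perm (Fin (γ₁ i))) (τ₂ : ∀ i, Equiv.Perm (Fin (γ₂ i))) :
    ∀ i, Equiv.Perm (Fin (γ₁ i + γ₂ i)) :=
  fun i => finSumPerm (τ₁ i) (τ₂ i)

variable (τ₁ : ∀ i, Equiv.Perm (Fin (γ₁ i))) (τ₂ : ∀ i, Equiv.Perm (Fin (γ₂ i)))

lemma permEquiv_blockPerm_inlV (v : Vars γ₁) :
    permEquiv (γ := γ₁ + γ₂) (blockPerm τ₁ τ₂) (inlV v) = inlV (permEquiv τ₁ v) :=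
  Sigma.ext rfl (heq_of_eq (finSumPerm_castAdd _ _ _))

lemma permEquiv_blockPerm_inrV (v : Vars γ₂) :
    permEquiv (γ := γ₁ + γ₂) (blockPerm τ₁ τ₂) (inrV v) = inrV (permEquiv τ₂ v) :=
  Sigma.ext rfl (heq_of_eq (finSumPerm_natAdd _ _ _))

lemma permute_blockPerm_rename_inlV (f : Amod γ₁) :
    permute (γ := γ₁ + γ₂) (blockPerm τ₁ τ₂) (rename inlV f) = rename inlV (permute τ₁ f) := by
  simp only [permute, rename_rename]
  congr 2
  exact _root_.funext (permEquiv_blockPerm_inlV τ₁ τ₂)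

lemma permute_blockPerm_rename_inrV (f : Amod γ₂) :
    permute (γ := γ₁ + γ₂) (blockPerm τ₁ τ₂) (rename inrV f) = rename inrV (permute τ₂ f) := by
  simp only [permute, rename_rename]
  congr 2
  exact _root_.funext (permEquiv_blockPerm_inrV τ₁ τ₂)

variable [Fintype I] [DecidableEq I]

lemma permute_blockPerm_Fpoly (a : I → I → ℕ) :
    permute (γ := γ₁ + γ₂) (blockPerm τ₁ τ₂) (Fpoly a γ₁ γ₂) = Fpoly a γ₁ γ₂ := by
  simp only [Fpoly, map_prod, map_pow, map_sub, permute, rename_X]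
  refine Fintype.prod_congr _ _ fun i => Fintype.prod_congr _ _ fun j => ?_
  refine Fintype.prod_equiv (τ₁ i) _ _ fun α₁ => Fintype.prod_equiv (τ₂ j) _ _ fun α₂ => ?_
  rw [permEquiv_blockPerm_inlV, permEquiv_blockPerm_inrV]
  rfl

end Blocks

section ShuffleProduct

variable {I : Type} [Fintype I] {γ₁ γ₂ : I → ℕ}

lemma shuffleDen_ne_zero (γ₁ γ₂ : I → ℕ) : shuffleDen (I := I) γ₁ γ₂ ≠ 0 := by
  simp only [shuffleDen, Finset.prod_ne_zero_iff, Finset.mem_univ, forall_const]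
  intro i α₁ α₂ h
  have := congrArg (fun v => (v.2 : ℕ)) (X_injective (sub_eq_zero.mp h))
  simp only [inrV, inlV, Fin.val_natAdd, Fin.val_castAdd] at this
  omega

variable [DecidableEq I]

variable (γ₁ γ₂) in
noncomputable def shuffleBlockEquiv :
    {σ : ∀ i, Equiv.Perm (Fin (γ₁ i + γ₂ i)) // ∀ i, IsShuffle (γ₁ i) (γ₂ i) (σ i)} ×
        ((∀ i, Equiv.Perm (Fin (γ₁ i))) × (∀ i, Equiv.Perm (Fin (γ₂ i)))) ≃
      ∀ i, Equiv.Perm (Fin (γ₁ i + γ₂ i)) :=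
  Equiv.ofBijective (fun x => x.1.1 * blockPerm x.2.1 x.2.2) <| by
    constructor
    · rintro ⟨⟨s, hs⟩, τ₁, τ₂⟩ ⟨⟨s', hs'⟩, ν₁, ν₂⟩ h
      have key := fun i => IsShuffle.eq_of_mul_finSumPerm_eq (hs i) (hs' i) (congrFun h i)
      simp only [Prod.mk.injEq, Subtype.mk.injEq]
      exact ⟨funext fun i => (key i).1, funext fun i => (key i).2.1,
        funext fun i => (key i).2.2⟩
    · intro π
      choose s τ₁ τ₂ hs hπ using fun i => exists_isShuffle_mul_finSumPerm (π i)
      exact ⟨⟨⟨s, hs⟩, τ₁, τ₂⟩, funext hπ⟩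

open Classical in
lemma sum_eq_sum_shuffle_sum_blockPerm {M : Type*} [AddCommMonoid M]
    (g : (∀ i, Equiv.Perm (Fin (γ₁ i + γ₂ i))) → M) :
    ∑ π, g π = ∑ σ : ∀ i, Equiv.Perm (Fin (γ₁ i + γ₂ i)), if ∀ i, IsShuffle (γ₁ i) (γ₂ i) (σ i) then
      ∑ τ₁, ∑ τ₂, g (σ * blockPerm τ₁ τ₂) else 0 := by
  rw [← (shuffleBlockEquiv γ₁ γ₂).sum_comp, Fintype.sum_prod_type, ← Finset.sum_filter,
    Finset.sum_subtype _ (fun _ => Finset.mem_filter_univ _)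
      fun σ => ∑ τ₁, ∑ τ₂, g (σ * blockPerm τ₁ τ₂)]
  simp only [Fintype.sum_prod_type]
  rfl

variable (a : I → I → ℕ)

lemma shuffleNum_eq_Fpoly_mul_shuffleDen (hloops : ∀ i, 1 ≤ a i i) :
    shuffleNum a γ₁ γ₂ = Fpoly a γ₁ γ₂ * shuffleDen γ₁ γ₂ := by
  have hsplit : ∀ i j (d : Amod (γ₁ + γ₂)),
      d ^ a i j = d ^ (if i = j then a i i - 1 else a i j) * if i = j then d else 1 := by
    intro i j d
    split_ifs with h
    · subst h; rw [← pow_succ, Nat.sub_add_cancel (hloops i)]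
    · rw [mul_one]
  simp only [shuffleNum, Fpoly, shuffleDen, hsplit, Finset.prod_mul_distrib]
  congr 1
  simp [Finset.prod_ite_irrel]

open Classical in
lemma shuffleMul_eq_sum (hloops : ∀ i, 1 ≤ a i i) (f₁ : Amod γ₁) (f₂ : Amod γ₂) :
    shuffleMul a f₁ f₂ = ∑ σ : ∀ i, Equiv.Perm (Fin (γ₁ i + γ₂ i)),
      if ∀ i, IsShuffle (γ₁ i) (γ₂ i) (σ i) then
        permute (γ := γ₁ + γ₂) σ (rename inlV f₁ * rename inrV f₂ * Fpoly a γ₁ γ₂)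
      else 0 := by
  set p := ∑ σ : ∀ i, Equiv.Perm (Fin (γ₁ i + γ₂ i)),
    if ∀ i, IsShuffle (γ₁ i) (γ₂ i) (σ i) then
      permute (γ := γ₁ + γ₂) σ (rename inlV f₁ * rename inrV f₂ * Fpoly a γ₁ γ₂)
    else 0
  have hp : algebraMap _ (FractionRing (Amod (γ₁ + γ₂))) p = shuffleSum a γ₁ γ₂ f₁ f₂ := by
    simp only [p, shuffleSum, map_sum, apply_ite (algebraMap _ _), map_zero]
    refine Finset.sum_congr rfl fun σ _ => if_congr Iff.rfl ?_ rfl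
    have hden : algebraMap _ (FractionRing (Amod (γ₁ + γ₂)))
        (rename (permEquiv (γ := γ₁ + γ₂) σ) (shuffleDen γ₁ γ₂)) ≠ 0 := by
      rw [Ne, IsFractionRing.to_map_eq_zero_iff,
        map_eq_zero_iff _ (rename_injective _ (permEquiv _).injective)]
      exact shuffleDen_ne_zero γ₁ γ₂
    rw [eq_div_iff hden, ← map_mul, shuffleNum_eq_Fpoly_mul_shuffleDen a hloops, ← mul_assoc]
    exact congrArg _ (map_mul (rename _) _ _).symm
  have hex : ∃ q, algebraMap _ (FractionRing (Amod (γ₁ + γ₂))) q = shuffleSum a γ₁ γ₂ f₁ f₂ :=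
    ⟨p, hp⟩
  rw [shuffleMul, dif_pos hex]
  exact IsFractionRing.injective _ (FractionRing (Amod (γ₁ + γ₂))) (hex.choose_spec.trans hp.symm)

/-- `P_{γ₁+γ₂}` is shuffles times block permutations, and the block permutations fix `Fpoly`. -/
lemma symmetrize_mul_Fpoly (hloops : ∀ i, 1 ≤ a i i) (u : Amod γ₁) (v : Amod γ₂) :
    symmetrize (γ₁ + γ₂) (rename inlV u * rename inrV v * Fpoly a γ₁ γ₂) =
      shuffleMul a (symmetrize γ₁ u) (symmetrize γ₂ v) := by
  classical
  rw [symmetrize_apply, shuffleMul_eq_sum a hloops]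
  refine (sum_eq_sum_shuffle_sum_blockPerm (γ₁ := γ₁) (γ₂ := γ₂) fun π =>
    permute (γ := γ₁ + γ₂) π (rename inlV u * rename inrV v * Fpoly a γ₁ γ₂)).trans ?_
  refine Finset.sum_congr rfl fun σ _ => if_congr Iff.rfl ?_ rfl
  simp only [symmetrize_apply, map_sum, Finset.sum_mul, Finset.mul_sum, ← permute_permute,
    map_mul, permute_blockPerm_rename_inlV, permute_blockPerm_rename_inrV,
    permute_blockPerm_Fpoly]
  exact Finset.sum_comm

end ShuffleProduct

section Spanning

variable {I : Type}

lemma span_rename_inlV_mul_rename_inrV_eq_top (γ₁ γ₂ : I → ℕ) :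
    Submodule.span ℚ ((((rename (R := ℚ) (inlV (γ₂ := γ₂))).range.toSubmonoid ⊔
      (rename (R := ℚ) (inrV (γ₁ := γ₁))).range.toSubmonoid) : Submonoid _) :
        Set (Amod (γ₁ + γ₂))) = ⊤ :=
  MvPolynomial.span_rename_mul_rename_eq_top fun ⟨i, β⟩ => by
    induction β using Fin.addCases with
    | left p => exact Or.inl ⟨⟨i, p⟩, rfl⟩
    | right p => exact Or.inr ⟨⟨i, p⟩, rfl⟩

lemma X_sub_X_mem_Aprim {γ : I → ℕ} (u v : Vars γ) : X u - X v ∈ Aprim γ :=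
  Algebra.subset_adjoin ⟨u, v, rfl⟩

variable [Fintype I]

/-- `|Vars γ| • x_v = σ_γ + ∑_u (x_v - x_u)`, so `A_γ = A_γ^{prim}[σ_γ]`. -/
lemma span_Aprim_sup_powers_sigmaP_eq_top (γ : I → ℕ) :
    Submodule.span ℚ (((Aprim γ).toSubmonoid ⊔ Submonoid.powers (sigmaP γ) : Submonoid _) :
      Set (Amod γ)) = ⊤ := by
  refine MvPolynomial.span_eq_top_of_X_mem_adjoin _ fun v => ?_
  have hcard : (Fintype.card (Vars γ) : ℚ) ≠ 0 := by
    have : Nonempty (Vars γ) := ⟨v⟩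
    positivity
  have hX : X v = (Fintype.card (Vars γ) : ℚ)⁻¹ • (sigmaP γ + ∑ u, (X v - X u)) := by
    rw [eq_inv_smul_iff₀ hcard, Finset.sum_sub_distrib, Finset.sum_const, Finset.card_univ,
      sigmaP, add_sub_cancel, Nat.cast_smul_eq_nsmul]
  rw [hX]
  refine Subalgebra.smul_mem _ (add_mem ?_ (Subalgebra.sum_mem _ fun u _ => ?_)) _
  · exact Algebra.subset_adjoin (Submonoid.mem_sup_right (Submonoid.mem_powers _))
  · exact Algebra.subset_adjoin (Submonoid.mem_sup_left (X_sub_X_mem_Aprim v u))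

end Spanning

section Image

variable {I : Type}

lemma castA_rfl {γ : I → ℕ} (f : Amod γ) : castA rfl f = f := by
  have : (castV (rfl : γ = γ) : Vars γ → Vars γ) = id := funext fun _ => rfl
  rw [castA, this, rename_id, AlgHom.id_apply]

lemma permute_mem_Aprim {γ : I → ℕ} (σ : ∀ i, Equiv.Perm (Fin (γ i))) {p : Amod γ}
    (hp : p ∈ Aprim γ) : permute σ p ∈ Aprim γ := by
  have hmap : (Aprim γ).map (permute σ) ≤ Aprim γ := by
    rw [Aprim, AlgHom.map_adjoin]
    refine Algebra.adjoin_le ?_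
    rintro _ ⟨_, ⟨u, v, rfl⟩, rfl⟩
    exact Algebra.subset_adjoin ⟨permEquiv σ u, permEquiv σ v, by simp [permute]⟩
  exact hmap ⟨p, hp, rfl⟩

variable [Fintype I] [DecidableEq I] (a : I → I → ℕ) (γ : I → ℕ)

def shuffleProducts : Set (Amod γ) :=
  {h | ∃ (γ₁ γ₂ : I → ℕ) (_ : γ₁ ≠ 0) (_ : γ₂ ≠ 0) (hs : γ₁ + γ₂ = γ)
    (f₁ : Amod γ₁) (f₂ : Amod γ₂), IsSym f₁ ∧ IsSym f₂ ∧ h = castA hs (shuffleMul a f₁ f₂)}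

def symmetrizedFpolyMultiples : Set (Amod γ) :=
  {h | ∃ (γ₁ γ₂ : I → ℕ) (_ : γ₁ ≠ 0) (_ : γ₂ ≠ 0) (hs : γ₁ + γ₂ = γ) (q : Amod γ),
    h = symmetrize γ (q * castA hs (Fpoly a γ₁ γ₂))}

def symJMulSigmaPowers : Set (Amod γ) :=
  {h | ∃ (g : Aprim γ) (n : ℕ),
    g ∈ Jideal a γ ∧ IsSym (g : Amod γ) ∧ h = (g : Amod γ) * sigmaP γ ^ n}

variable {a γ}

lemma shuffleProducts_subset_symmetrizedFpolyMultiples (hloops : ∀ i, 1 ≤ a i i) :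
    shuffleProducts a γ ⊆ symmetrizedFpolyMultiples a γ := by
  rintro _ ⟨γ₁, γ₂, h₁, h₂, rfl, f₁, f₂, hf₁, hf₂, rfl⟩
  refine ⟨γ₁, γ₂, h₁, h₂, rfl,
    rename inlV ((Fintype.card (∀ i, Equiv.Perm (Fin (γ₁ i))) : ℚ)⁻¹ • f₁) *
      rename inrV ((Fintype.card (∀ i, Equiv.Perm (Fin (γ₂ i))) : ℚ)⁻¹ • f₂), ?_⟩
  rw [castA_rfl, castA_rfl, symmetrize_mul_Fpoly a hloops, symmetrize_inv_card_smul hf₁,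
    symmetrize_inv_card_smul hf₂]

lemma symmetrizedFpolyMultiples_subset_span_shuffleProducts (hloops : ∀ i, 1 ≤ a i i) :
    symmetrizedFpolyMultiples a γ ⊆ Submodule.span ℚ (shuffleProducts a γ) := by
  rintro _ ⟨γ₁, γ₂, h₁, h₂, rfl, q, rfl⟩
  rw [castA_rfl]
  suffices h : ⊤ ≤ (Submodule.span ℚ (shuffleProducts a (γ₁ + γ₂))).comap
      ((symmetrize _).comp (LinearMap.mulRight ℚ (Fpoly a γ₁ γ₂))) from h Submodule.mem_top
  rw [← span_rename_inlV_mul_rename_inrV_eq_top, Submodule.span_le]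
  intro _ hx
  obtain ⟨_, ⟨u, rfl⟩, _, ⟨v, rfl⟩, rfl⟩ := Submonoid.mem_sup.mp hx
  refine Submodule.subset_span ⟨γ₁, γ₂, h₁, h₂, rfl, _, _, isSym_symmetrize u,
    isSym_symmetrize v, ?_⟩
  rw [castA_rfl]
  exact symmetrize_mul_Fpoly a hloops u v

lemma symmetrize_mul_mem_span_of_mem_Jideal {x : Aprim γ} (hx : x ∈ Jideal a γ) (q : Amod γ) :
    symmetrize γ (q * x) ∈ Submodule.span ℚ (symmetrizedFpolyMultiples a γ) := by
  induction hx using Submodule.span_induction generalizing q with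
  | mem y hy =>
    obtain ⟨γ₁, γ₂, h₁, h₂, hs, ρ, hy⟩ := hy
    have hq : q * y = permute ρ (permute ρ⁻¹ q * castA hs (Fpoly a γ₁ γ₂)) := by
      rw [map_mul, permute_permute, mul_inv_cancel, permute_one, hy]
      rfl
    rw [hq, symmetrize_permute]
    exact Submodule.subset_span ⟨γ₁, γ₂, h₁, h₂, hs, permute ρ⁻¹ q, rfl⟩
  | zero => simp
  | add y z _ _ hy hz => simpa [mul_add] using add_mem (hy q) (hz q)
  | smul r y _ hy => simpa [mul_assoc] using hy (q * r)

lemma symJMulSigmaPowers_subset_span_symmetrizedFpolyMultiples :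
    symJMulSigmaPowers a γ ⊆ Submodule.span ℚ (symmetrizedFpolyMultiples a γ) := by
  rintro _ ⟨g, n, hg, hgs, rfl⟩
  have hsym : IsSym ((g : Amod γ) * sigmaP γ ^ n) :=
    (Halg γ).mul_mem hgs ((Halg γ).pow_mem (isSym_sigmaP γ) n)
  rw [← symmetrize_inv_card_smul hsym, mul_comm, ← smul_mul_assoc]
  exact symmetrize_mul_mem_span_of_mem_Jideal hg _

lemma symmetrize_mul_Fpoly_mem_Jideal {γ₁ γ₂ : I → ℕ} (h₁ : γ₁ ≠ 0) (h₂ : γ₂ ≠ 0)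
    {p : Amod (γ₁ + γ₂)} (hp : p ∈ Aprim (γ₁ + γ₂)) :
    ∃ g ∈ Jideal a (γ₁ + γ₂), (g : Amod (γ₁ + γ₂)) = symmetrize _ (p * Fpoly a γ₁ γ₂) := by
  have hF : Fpoly a γ₁ γ₂ ∈ Aprim (γ₁ + γ₂) := by
    simp only [Fpoly]
    exact prod_mem fun _ _ => prod_mem fun _ _ => prod_mem fun _ _ => prod_mem fun _ _ =>
      pow_mem (X_sub_X_mem_Aprim _ _) _
  refine ⟨∑ ρ, ⟨permute ρ p, permute_mem_Aprim ρ hp⟩ * ⟨permute ρ _, permute_mem_Aprim ρ hF⟩,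
    Ideal.sum_mem _ fun ρ _ => Ideal.mul_mem_left _ _ (Ideal.subset_span ?_), ?_⟩
  · exact ⟨γ₁, γ₂, h₁, h₂, rfl, ρ, by rw [castA_rfl]; rfl⟩
  · simp [symmetrize_apply]

lemma symmetrizedFpolyMultiples_subset_span_symJMulSigmaPowers :
    symmetrizedFpolyMultiples a γ ⊆ Submodule.span ℚ (symJMulSigmaPowers a γ) := by
  rintro _ ⟨γ₁, γ₂, h₁, h₂, rfl, q, rfl⟩
  rw [castA_rfl]
  suffices h : ⊤ ≤ (Submodule.span ℚ (symJMulSigmaPowers a (γ₁ + γ₂))).comap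
      ((symmetrize _).comp (LinearMap.mulRight ℚ (Fpoly a γ₁ γ₂))) from h Submodule.mem_top
  rw [← span_Aprim_sup_powers_sigmaP_eq_top, Submodule.span_le]
  intro _ hx
  obtain ⟨p, hp, _, ⟨n, rfl⟩, rfl⟩ := Submonoid.mem_sup.mp hx
  obtain ⟨g, hg, hgp⟩ := symmetrize_mul_Fpoly_mem_Jideal h₁ h₂ hp
  refine Submodule.subset_span ⟨g, n, hg, hgp ▸ isSym_symmetrize _, ?_⟩
  rw [LinearMap.comp_apply, LinearMap.mulRight_apply, mul_right_comm,
    symmetrize_mul_of_isSym ((Halg _).pow_mem (isSym_sigmaP _) n), hgp]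

lemma span_shuffleProducts_eq (hloops : ∀ i, 1 ≤ a i i) :
    Submodule.span ℚ (shuffleProducts a γ) = Submodule.span ℚ (symmetrizedFpolyMultiples a γ) :=
  le_antisymm (Submodule.span_mono (shuffleProducts_subset_symmetrizedFpolyMultiples hloops))
    (Submodule.span_le.mpr (symmetrizedFpolyMultiples_subset_span_shuffleProducts hloops))

lemma span_symmetrizedFpolyMultiples_eq :
    Submodule.span ℚ (symmetrizedFpolyMultiples a γ) =
      Submodule.span ℚ (symJMulSigmaPowers a γ) :=
  le_antisymm (Submodule.span_le.mpr symmetrizedFpolyMultiples_subset_span_symJMulSigmaPowers)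
    (Submodule.span_le.mpr symJMulSigmaPowers_subset_span_symmetrizedFpolyMultiples)

end Image

theorem image_of_multiplication_eq_general
    (I : Type) [Fintype I] [DecidableEq I] (a : I → I → ℕ)
    (hloops : ∀ i : I, 1 ≤ a i i) (γ : I → ℕ) :
    Submodule.span ℚ {h : Amod γ |
        ∃ (γ₁ γ₂ : I → ℕ) (_ : γ₁ ≠ 0) (_ : γ₂ ≠ 0) (hs : γ₁ + γ₂ = γ)
          (f₁ : Amod γ₁) (f₂ : Amod γ₂),
          IsSym f₁ ∧ IsSym f₂ ∧ h = castA hs (shuffleMul a f₁ f₂)} =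
      Submodule.span ℚ {h : Amod γ |
        ∃ (g : ↥(Aprim (I := I) γ)) (n : ℕ),
          g ∈ Jideal a γ ∧ IsSym (g : Amod γ) ∧ h = (g : Amod γ) * sigmaP γ ^ n} :=
  (span_shuffleProducts_eq hloops).trans span_symmetrizedFpolyMultiples_eq

/-- **The image of the multiplication map.**  For a symmetric quiver with at least one
loop at each vertex, the span of all shuffle products `f₁ · f₂` over all decompositions
`γ = γ₁ + γ₂` with `γ₁, γ₂ ≠ 0` and all `f₁ ∈ ℋ_{γ₁}`, `f₂ ∈ ℋ_{γ₂}` is precisely the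
`ℚ[σ_γ]`-submodule of `ℋ_γ` generated by `J_γ^{P_γ} = J_γ ∩ ℋ_γ^{prim}`. -/
theorem image_of_multiplication_eq
    (I : Type) [Fintype I] [DecidableEq I] (a : I → I → ℕ)
    (hsym : ∀ i j : I, a i j = a j i) (hloops : ∀ i : I, 1 ≤ a i i) (γ : I → ℕ) :
    Submodule.span ℚ {h : Amod γ |
        ∃ (γ₁ γ₂ : I → ℕ) (_ : γ₁ ≠ 0) (_ : γ₂ ≠ 0) (hs : γ₁ + γ₂ = γ)
          (f₁ : Amod γ₁) (f₂ : Amod γ₂),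
          IsSym f₁ ∧ IsSym f₂ ∧ h = castA hs (shuffleMul a f₁ f₂)} =
      Submodule.span ℚ {h : Amod γ |
        ∃ (g : ↥(Aprim (I := I) γ)) (n : ℕ),
          g ∈ Jideal a γ ∧ IsSym (g : Amod γ) ∧ h = (g : Amod γ) * sigmaP γ ^ n} :=
  image_of_multiplication_eq_general I a hloops γ
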